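/- Let m > 0, n ≥ 1, and for r > 0 let c(r) ∈ [0,1) solve c = (|P|−c)/sqrt(m²r²+(|P|−c)²) with |P| = p⁽ⁿ⁺¹⁾ (the unique momentum with ½|P|² = E₀⁽ⁿ⁺¹⁾(P)). Define f(r) := (1 − c(r)²)^{3/2} / c(r)². Then f(r) ≤ ½ m r for all 0 < r ≤ n+1, and consequently f'(r) ≤ m for all 0 < r ≤ n+1. -/

import Mathlib

/-!
Write `p = ‖P‖`. The defining equation of `c = c(r)` is equivalent to
`(p - c) √(1 - c²) = m r c`, i.e. `r = radiusOf m p c`, and the energy condition at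
`r₁ = n + 1` reduces to `c(r₁) (p + c(r₁)) = 2`, which forces `p > 1`. Then `radiusOf m p` is
strictly decreasing on `(0, 1)`, so `c` is decreasing and `2 ≤ c(r) (p + c(r))` for `r ≤ r₁`.
Both bounds are equivalent to this inequality: `f(r) ≤ m r / 2` directly, and `f'(r) ≤ m` once
`c'(r) = 1 / radiusOf'(c(r))` is computed by the inverse function theorem.
-/

open Real Set Filter Topology

/-- A variant of `HasDerivAt.of_local_left_inverse` in which continuity of `c` is replaced by
injectivity of `ψ`: the strict derivative makes `ψ` open near `c r`. -/
theorem HasStrictDerivAt.of_local_left_inverse_of_injOn {ψ c : ℝ → ℝ} {ψ' r : ℝ} {I : Set ℝ}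
    (hψ : HasStrictDerivAt ψ ψ' (c r)) (hψ' : ψ' ≠ 0) (hI : IsOpen I) (hinj : InjOn ψ I)
    (hcI : ∀ᶠ s in 𝓝 r, c s ∈ I) (hleft : ∀ᶠ s in 𝓝 r, ψ (c s) = s) :
    HasDerivAt c ψ'⁻¹ r := by
  have hr : ψ (c r) = r := hleft.self_of_nhds
  have hcont : ContinuousAt c r := by
    refine fun V hV => mem_map.mpr ?_
    have hψV : ψ '' (V ∩ I) ∈ 𝓝 r := by
      rw [← hr, ← hψ.map_nhds_eq hψ']
      exact image_mem_map (inter_mem hV (hI.mem_nhds hcI.self_of_nhds))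
    filter_upwards [hψV, hcI, hleft] with s ⟨v, hv, hvs⟩ hs hs'
    show c s ∈ V
    rw [hinj hs hv.2 (hs'.trans hvs.symm)]
    exact hv.1
  exact hψ.hasDerivAt.of_local_left_inverse hcont hψ' hleft

namespace CriticalMomentum

/-- Solving `c = (p - c) / √(m² r² + (p - c)²)` for `r` gives `r = radiusOf m p c`. -/
noncomputable def radiusOf (m p y : ℝ) : ℝ := √(1 - y ^ 2) * (p - y) / (m * y)

noncomputable def profile (y : ℝ) : ℝ := (1 - y ^ 2) ^ ((3 : ℝ) / 2) / y ^ 2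

variable {m p r y : ℝ}

lemma pos_of_eq_div_sqrt (hp : 0 < p)
    (h : y = (p - y) / √(m ^ 2 * r ^ 2 + (p - y) ^ 2)) : 0 < y := by
  by_contra! hy
  have hpy : 0 < p - y := by linarith
  have : 0 < (p - y) / √(m ^ 2 * r ^ 2 + (p - y) ^ 2) :=
    div_pos hpy (sqrt_pos.mpr (add_pos_of_nonneg_of_pos (by positivity) (pow_pos hpy 2)))
  linarith

lemma radiusOf_eq_of_eq_div_sqrt (hm : 0 < m) (hr : 0 < r) (hy0 : 0 < y) (hy1 : y < 1)
    (h : y = (p - y) / √(m ^ 2 * r ^ 2 + (p - y) ^ 2)) : radiusOf m p y = r := by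
  set S := √(m ^ 2 * r ^ 2 + (p - y) ^ 2)
  have hS : 0 < S := sqrt_pos.mpr (by positivity)
  have hS2 : S ^ 2 = m ^ 2 * r ^ 2 + (p - y) ^ 2 := sq_sqrt (by positivity)
  have hyS : y * S = p - y := (eq_div_iff hS.ne').mp h
  have hu2 : √(1 - y ^ 2) ^ 2 = 1 - y ^ 2 := sq_sqrt (by nlinarith)
  have hpy : 0 < p - y := hyS ▸ mul_pos hy0 hS
  have hsq : (√(1 - y ^ 2) * (p - y)) ^ 2 = (r * (m * y)) ^ 2 := by
    linear_combination (p - y) ^ 2 * hu2 + y ^ 2 * hS2 - (y * S + p - y) * hyS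
  rw [radiusOf, div_eq_iff (by positivity)]
  exact (pow_left_inj₀ (by positivity) (by positivity) two_ne_zero).mp hsq

lemma mul_add_eq_two_of_energy {S : ℝ} (hy : 0 < y) (hS : 0 < S) (hfix : y = (p - y) / S)
    (hE : p ^ 2 / 2 = y ^ 2 / 2 + S) : y * (p + y) = 2 := by
  have hyS : y * S = p - y := (eq_div_iff hS.ne').mp hfix
  have hpy : p - y ≠ 0 := (hyS ▸ mul_pos hy hS).ne'
  refine mul_left_cancel₀ hpy ?_
  linear_combination 2 * y * hE + 2 * hyS

lemma hasStrictDerivAt_radiusOf (hm : m ≠ 0) (hy0 : 0 < y) (hy1 : y < 1) :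
    HasStrictDerivAt (radiusOf m p) ((y ^ 3 - p) / (m * √(1 - y ^ 2) * y ^ 2)) y := by
  have hu : 0 < √(1 - y ^ 2) := sqrt_pos.mpr (by nlinarith)
  have hu2 : √(1 - y ^ 2) ^ 2 = 1 - y ^ 2 := sq_sqrt (by nlinarith)
  have hsqrt : HasStrictDerivAt (fun y : ℝ => √(1 - y ^ 2)) (-(2 * y) / (2 * √(1 - y ^ 2))) y :=
    by simpa using ((hasStrictDerivAt_pow 2 y).const_sub 1).sqrt (by nlinarith)
  have h : HasStrictDerivAt (fun y => √(1 - y ^ 2) * (p - y) / (m * y)) _ y :=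
    (hsqrt.mul ((hasStrictDerivAt_id y).const_sub p)).div
      ((hasStrictDerivAt_id y).const_mul m) (by positivity)
  refine h.congr_deriv ?_
  simp only [id, Pi.mul_apply]
  field_simp
  linear_combination -p * hu2

lemma radiusOf_deriv_neg (hm : 0 < m) (hp : 1 ≤ p) (hy0 : 0 < y) (hy1 : y < 1) :
    (y ^ 3 - p) / (m * √(1 - y ^ 2) * y ^ 2) < 0 := by
  have hu : 0 < √(1 - y ^ 2) := sqrt_pos.mpr (by nlinarith)
  have hy3 : y ^ 3 < 1 := pow_lt_one₀ hy0.le hy1 three_ne_zero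
  exact div_neg_of_neg_of_pos (by linarith) (by positivity)

lemma strictAntiOn_radiusOf (hm : 0 < m) (hp : 1 ≤ p) :
    StrictAntiOn (radiusOf m p) (Ioo 0 1) := by
  have hderiv : ∀ y ∈ interior (Ioo (0 : ℝ) 1),
      HasDerivAt (radiusOf m p) ((y ^ 3 - p) / (m * √(1 - y ^ 2) * y ^ 2)) y := by
    rw [interior_Ioo]
    exact fun y hy => (hasStrictDerivAt_radiusOf hm.ne' hy.1 hy.2).hasDerivAt
  refine strictAntiOn_of_hasDerivWithinAt_neg (convex_Ioo 0 1) (fun y hy => ?_)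
    (fun y hy => (hderiv y hy).hasDerivWithinAt) fun y hy => ?_
  · exact (hderiv y (by rwa [interior_Ioo])).continuousAt.continuousWithinAt
  · rw [interior_Ioo] at hy
    exact radiusOf_deriv_neg hm hp hy.1 hy.2

lemma profile_eq_sqrt (hy : y ^ 2 ≤ 1) : profile y = √(1 - y ^ 2) ^ 3 / y ^ 2 := by
  rw [profile, rpow_div_two_eq_sqrt _ (by linarith)]
  norm_cast

lemma hasDerivAt_profile (hy0 : 0 < y) (hy1 : y < 1) :
    HasDerivAt profile (-(√(1 - y ^ 2) * (y ^ 2 + 2)) / y ^ 3) y := by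
  have hpos : 0 < 1 - y ^ 2 := by nlinarith
  have hu2 : √(1 - y ^ 2) ^ 2 = 1 - y ^ 2 := sq_sqrt hpos.le
  have h : HasDerivAt (fun y => (1 - y ^ 2) ^ ((3 : ℝ) / 2) / y ^ 2) _ y :=
    (((hasDerivAt_pow 2 y).const_sub 1).rpow_const (Or.inr (by norm_num))).div
      (hasDerivAt_pow 2 y) (by positivity)
  refine h.congr_deriv ?_
  rw [show (3 : ℝ) / 2 - 1 = 1 / 2 by norm_num, ← sqrt_eq_rpow, rpow_div_two_eq_sqrt _ hpos.le]
  norm_cast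
  field_simp
  linear_combination -2 * y * hu2

lemma profile_le_of_two_le (hm : m ≠ 0) (hy0 : 0 < y) (hy1 : y < 1) (h : 2 ≤ y * p + y ^ 2) :
    profile y ≤ m * radiusOf m p y / 2 := by
  have hu : 0 < √(1 - y ^ 2) := sqrt_pos.mpr (by nlinarith)
  have hu2 : √(1 - y ^ 2) ^ 2 = 1 - y ^ 2 := sq_sqrt (by nlinarith)
  have hmr : m * radiusOf m p y = √(1 - y ^ 2) * (p - y) / y := by
    rw [radiusOf]
    field_simp
  rw [profile_eq_sqrt (by nlinarith), hmr, div_div,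
    div_le_div_iff₀ (by positivity) (by positivity)]
  nlinarith [mul_pos hu hy0]

lemma profile_deriv_mul_inv_radiusOf_deriv_le (hm : 0 < m) (hy0 : 0 < y) (hy1 : y < 1)
    (h : 2 ≤ y * p + y ^ 2) :
    -(√(1 - y ^ 2) * (y ^ 2 + 2)) / y ^ 3 * ((y ^ 3 - p) / (m * √(1 - y ^ 2) * y ^ 2))⁻¹
      ≤ m := by
  have hu : 0 < √(1 - y ^ 2) := sqrt_pos.mpr (by nlinarith)
  have hu2 : √(1 - y ^ 2) ^ 2 = 1 - y ^ 2 := sq_sqrt (by nlinarith)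
  have hy3 : y ^ 3 < p := by nlinarith [pow_lt_one₀ hy0.le hy1 three_ne_zero]
  have heq : -(√(1 - y ^ 2) * (y ^ 2 + 2)) / y ^ 3 * ((y ^ 3 - p) / (m * √(1 - y ^ 2) * y ^ 2))⁻¹
      = m * ((1 - y ^ 2) * (y ^ 2 + 2) / (y * (p - y ^ 3))) := by
    rw [inv_div]
    field_simp
    rw [hu2, ← div_neg, neg_sub]
  rw [heq]
  exact mul_le_of_le_one_right hm.le ((div_le_one (by nlinarith)).mpr (by nlinarith))

end CriticalMomentum

open CriticalMomentum in
theorem f_bound_and_derivative_bound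
    (d : ℕ) (m : ℝ) (hm : 0 < m) (n : ℕ)
    (P : EuclideanSpace ℝ (Fin d)) (hP : P ≠ 0)
    (c : ℝ → ℝ)
    (hc : ∀ r : ℝ, 0 < r → c r ∈ Set.Ico (0 : ℝ) 1 ∧
      c r = (‖P‖ - c r) / Real.sqrt (m ^ 2 * r ^ 2 + (‖P‖ - c r) ^ 2))
    (hcrit : ‖P‖ ^ 2 / 2 =
      (c ((n : ℝ) + 1)) ^ 2 / 2 +
        Real.sqrt (m ^ 2 * ((n : ℝ) + 1) ^ 2 + (‖P‖ - c ((n : ℝ) + 1)) ^ 2)) :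
    (∀ r : ℝ, 0 < r → r ≤ (n : ℝ) + 1 →
      (1 - (c r) ^ 2) ^ ((3 : ℝ) / 2) / (c r) ^ 2 ≤ m * r / 2) ∧
    (∀ r : ℝ, 0 < r → r ≤ (n : ℝ) + 1 → ∀ f' : ℝ,
      HasDerivAt (fun s => (1 - (c s) ^ 2) ^ ((3 : ℝ) / 2) / (c s) ^ 2) f' r →
        f' ≤ m) := by
  set p := ‖P‖
  have hp : 0 < p := norm_pos_iff.mpr hP
  have hsol (r : ℝ) (hr : 0 < r) : c r ∈ Ioo 0 1 ∧ radiusOf m p (c r) = r := by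
    obtain ⟨⟨-, hlt⟩, heq⟩ := hc r hr
    have hpos := pos_of_eq_div_sqrt hp heq
    exact ⟨⟨hpos, hlt⟩, radiusOf_eq_of_eq_div_sqrt hm hr hpos hlt heq⟩
  set r₁ : ℝ := n + 1
  have hr₁ : 0 < r₁ := by positivity
  obtain ⟨⟨hc₁0, hc₁1⟩, -⟩ := hsol r₁ hr₁
  have hc₁ : c r₁ * (p + c r₁) = 2 :=
    mul_add_eq_two_of_energy hc₁0 (sqrt_pos.mpr (by positivity)) (hc r₁ hr₁).2 hcrit
  have hp1 : 1 ≤ p := by nlinarith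
  have hanti := strictAntiOn_radiusOf hm hp1
  have hkey (r : ℝ) (hr : 0 < r) (hrr₁ : r ≤ r₁) : 2 ≤ c r * p + c r ^ 2 := by
    have hle : c r₁ ≤ c r := (hanti.le_iff_ge (hsol r hr).1 (hsol r₁ hr₁).1).mp <| by
      rwa [(hsol r hr).2, (hsol r₁ hr₁).2]
    nlinarith
  refine ⟨fun r hr hrr₁ => ?_, fun r hr hrr₁ f' hf' => ?_⟩
  · obtain ⟨⟨h0, h1⟩, hrad⟩ := hsol r hr
    have h := profile_le_of_two_le hm.ne' h0 h1 (hkey r hr hrr₁)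
    rwa [hrad] at h
  · obtain ⟨⟨h0, h1⟩, -⟩ := hsol r hr
    have hc' : HasDerivAt c _ r :=
      (hasStrictDerivAt_radiusOf hm.ne' h0 h1).of_local_left_inverse_of_injOn
        (radiusOf_deriv_neg hm hp1 h0 h1).ne isOpen_Ioo hanti.injOn
        ((eventually_gt_nhds hr).mono fun s hs => (hsol s hs).1)
        ((eventually_gt_nhds hr).mono fun s hs => (hsol s hs).2)
    rw [hf'.unique ((hasDerivAt_profile h0 h1).comp r hc')]
    exact profile_deriv_mul_inv_radiusOf_deriv_le hm h0 h1 (hkey r hr hrr₁)
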